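/- Assume hypothesis (H). Let (x(·), y(·)) be a solution to the system starting at any point of S. Then lim_{t→∞} y(t)/x(t) = d/c. -/

import Mathlib

open MeasureTheory

/-- A solution to the system starting at `(x₀, y₀)`: a pair of continuous functions
`x, y : [0,∞) → [0,∞)` (modelled as functions `ℝ → ℝ` that are continuous and
nonnegative on `[0,∞)`) with `x 0 = x₀`, `y 0 = y₀`, such that for all `t ≥ 0`
the sets `{s ∈ [0,t] | x s = 0}` and `{s ∈ [0,t] | y s = 0}` are Lebesgue-null, the
integrals `∫₀ᵗ ds / x s` and `∫₀ᵗ ds / y s` are finite (note `1 / 0 = 0` in Lean, so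
`1 / x s` is the same as `1_{x(s) > 0} / x s`), and the two integral equations hold. -/
def IsSolution (α β γ δ x₀ y₀ : ℝ) (x y : ℝ → ℝ) : Prop :=
  ContinuousOn x (Set.Ici 0) ∧ ContinuousOn y (Set.Ici 0) ∧
  (∀ t ≥ (0:ℝ), 0 ≤ x t ∧ 0 ≤ y t) ∧
  x 0 = x₀ ∧ y 0 = y₀ ∧
  ∀ t ≥ (0:ℝ),
    volume {s ∈ Set.Icc (0:ℝ) t | x s = 0} = 0 ∧
    volume {s ∈ Set.Icc (0:ℝ) t | y s = 0} = 0 ∧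
    IntervalIntegrable (fun s => 1 / x s) volume 0 t ∧
    IntervalIntegrable (fun s => 1 / y s) volume 0 t ∧
    x t = x₀ + α * (∫ s in (0:ℝ)..t, 1 / x s) + β * (∫ s in (0:ℝ)..t, 1 / y s) ∧
    y t = y₀ + γ * (∫ s in (0:ℝ)..t, 1 / x s) + δ * (∫ s in (0:ℝ)..t, 1 / y s)

/-!
Both coordinates stay positive for `t > 0`. Under (H) some combination `p x + q y` with
`p, q ≥ 0` has a strictly positive `∫ 1/x`-coefficient and a nonnegative `∫ 1/y`-coefficient,
so it is positive for `t > 0`: `x` and `y` never vanish together. And `x` cannot vanish at some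
`t > 0` where `y t > 0`: just before `t` the integral equation forces `x u ≤ C (t - u)`, so `1 / x`
would not be integrable. Hence `x' = α / x + β / y` and `y' = γ / x + δ / y` on `(0, ∞)`.

For a root `r` of `α r² + (β - γ) r - δ`, the combination `y - r x` solves the linear equation
`(y - r x)' = (γ - r α) (y - r x) / (x y)`. For the roots `r' < 0 < r`, `v = y - r' x` is
positive, (H) is the inequality `μ = γ - r' α > 0`, and `-r' x y ≤ v²` gives `(v²)' ≥ -2 μ r'`,
so `v → ∞`. Since `y - r x` is a constant multiple of `v ^ ((γ - r α) / μ)` with exponent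
`< 1`, `(y - r x) / v → 0`, that is, `y / x → r`; finally `d / c = r`.
-/

open Filter Topology Set Real

theorem eq_mul_exp_of_hasDerivAt {f g G : ℝ → ℝ} {a c s t : ℝ}
    (hf : ∀ u > a, HasDerivAt f (c * g u * f u) u) (hG : ∀ u > a, HasDerivAt G (g u) u)
    (hs : a < s) (ht : a < t) : f t = f s * exp (c * (G t - G s)) := by
  have hderiv : ∀ u > a, HasDerivAt (fun u => f u * exp (-(c * G u))) 0 u := by
    intro u hu
    exact ((hf u hu).mul ((hG u hu).const_mul c).neg.exp).congr_deriv (by ring)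
  have hconst : f t * exp (-(c * G t)) = f s * exp (-(c * G s)) :=
    isOpen_Ioi.is_const_of_deriv_eq_zero isPreconnected_Ioi
      (fun u hu => (hderiv u hu).differentiableAt.differentiableWithinAt)
      (fun u hu => (hderiv u hu).deriv) ht hs
  calc f t = f t * exp (-(c * G t)) * exp (c * G t) := by rw [mul_assoc, ← exp_add]; simp
    _ = f s * exp (c * (G t - G s)) := by rw [hconst, mul_assoc, ← exp_add]; ring_nf

theorem tendsto_atTop_of_le_hasDerivAt {f f' : ℝ → ℝ} {a C : ℝ} (hC : 0 < C)
    (hf : ∀ u > a, HasDerivAt f (f' u) u) (hle : ∀ u > a, C ≤ f' u) :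
    Tendsto f atTop atTop := by
  have hgrowth : ∀ t ≥ a + 1, f (a + 1) + C * (t - (a + 1)) ≤ f t := by
    intro t ht
    have := (convex_Ioi a).mul_sub_le_image_sub_of_le_deriv
      (fun u hu => (hf u hu).continuousAt.continuousWithinAt)
      (fun u hu => (hf u (interior_subset hu)).differentiableAt.differentiableWithinAt)
      (fun u hu => (hf u (interior_subset hu)).deriv ▸ hle u (interior_subset hu))
      (a + 1) (by simp) t (by simp only [mem_Ioi]; linarith) ht
    linarith
  refine tendsto_atTop_mono' _ (eventually_ge_atTop (a + 1) |>.mono hgrowth) ?_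
  exact tendsto_atTop_add_const_left _ _
    ((tendsto_atTop_add_const_right _ _ tendsto_id).const_mul_atTop hC)

theorem not_intervalIntegrable_one_div_of_le_mul_sub {f : ℝ → ℝ} {s t C : ℝ} (hst : s < t)
    (hC : 0 < C) (hf : ∀ᵐ u ∂volume.restrict (Ioc s t), 0 < f u ∧ f u ≤ C * (t - u)) :
    ¬IntervalIntegrable (fun u => 1 / f u) volume s t := by
  intro hint
  have hinv : IntervalIntegrable (fun u => (u - t)⁻¹) volume s t := by
    refine (hint.const_mul C).mono_fun' (by fun_prop) ?_
    rw [uIoc_of_le hst.le]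
    filter_upwards [ae_restrict_mem measurableSet_Ioc, hf] with u hu ⟨hfu, hle⟩
    rcases hu.2.eq_or_lt with rfl | hut
    · simp only [sub_self, inv_zero, norm_zero]
      positivity
    rw [norm_inv, Real.norm_eq_abs, abs_sub_comm, abs_of_pos (sub_pos.mpr hut), mul_one_div,
      inv_le_comm₀ (sub_pos.mpr hut) (by positivity), inv_div, div_le_iff₀ hC]
    linarith
  rcases intervalIntegrable_sub_inv_iff.mp hinv with hst' | hnot
  · exact hst.ne hst'
  · exact hnot right_mem_uIcc

theorem tendsto_div_of_hasDerivAt_of_lt {u v g : ℝ → ℝ} {a κ μ : ℝ} (hμ : 0 < μ)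
    (hκμ : κ < μ) (hu : ∀ t > a, HasDerivAt u (κ * g t * u t) t)
    (hv : ∀ t > a, HasDerivAt v (μ * g t * v t) t)
    (hv0 : ∀ t > a, 0 < v t) (hlog : Tendsto (fun t => log (v t)) atTop atTop) :
    Tendsto (fun t => u t / v t) atTop (𝓝 0) := by
  have ha : a < a + 1 := lt_add_one a
  -- `u` is a constant multiple of `v ^ (κ / μ)`.
  have hu_exp : ∀ t > a, u t = u (a + 1) * exp (κ / μ * (log (v t) - log (v (a + 1)))) :=
    fun t ht => eq_mul_exp_of_hasDerivAt (g := fun s => μ * g s)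
      (fun s hs => (hu s hs).congr_deriv (by field_simp))
      (fun s hs => ((hv s hs).log (hv0 s hs).ne').congr_deriv <| by
        field_simp [(hv0 s hs).ne'])
      ha ht
  have hexponent : κ / μ - 1 < 0 := by
    rw [div_sub_one hμ.ne']
    exact div_neg_of_neg_of_pos (by linarith) hμ
  have h := (tendsto_exp_atBot.comp <| tendsto_atBot_add_const_right _
    (-(κ / μ * log (v (a + 1)))) (hlog.const_mul_atTop_of_neg hexponent)).const_mul (u (a + 1))
  rw [mul_zero] at h
  refine h.congr' ?_
  filter_upwards [eventually_gt_atTop a] with t ht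
  rw [hu_exp t ht, eq_div_iff (hv0 t ht).ne', mul_assoc]
  congr 1
  calc _ = exp ((κ / μ - 1) * log (v t) + -(κ / μ * log (v (a + 1)))) * exp (log (v t)) := by
          rw [exp_log (hv0 t ht)]; rfl
    _ = _ := by rw [← exp_add]; ring_nf

theorem tendsto_div_of_tendsto_sub_mul_div {ι : Type*} {l : Filter ι} {x y : ι → ℝ}
    {r r' : ℝ} (hrr' : r' ≠ r) (hx : ∀ᶠ t in l, x t ≠ 0) (hv : ∀ᶠ t in l, y t - r' * x t ≠ 0)
    (hw : Tendsto (fun t => (y t - r * x t) / (y t - r' * x t)) l (𝓝 0)) :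
    Tendsto (fun t => y t / x t) l (𝓝 r) := by
  -- `y / x = (r - r' w) / (1 - w)` for `w = (y - r x) / (y - r' x)`.
  have hlim := (tendsto_const_nhds (x := r)).sub (hw.const_mul r') |>.div
    (tendsto_const_nhds (x := (1 : ℝ)).sub hw) (by norm_num)
  simp only [mul_zero, sub_zero, div_one] at hlim
  refine hlim.congr' ?_
  filter_upwards [hx, hv] with t hxt hvt
  have hden : 1 - (y t - r * x t) / (y t - r' * x t) = (r - r') * x t / (y t - r' * x t) := by
    rw [one_sub_div hvt]; ring
  have hden0 : (r - r') * x t / (y t - r' * x t) ≠ 0 :=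
    div_ne_zero (mul_ne_zero (sub_ne_zero.mpr hrr'.symm) hxt) hvt
  simp only [Pi.div_apply]
  rw [hden, div_eq_div_iff hden0 hxt]
  field_simp
  ring

section Constants

variable {α β γ δ Δ r : ℝ}

theorem abs_sub_lt_of_sq_eq (hα : 0 < α) (hδ : 0 < δ) (hΔ : Δ ^ 2 = (β - γ) ^ 2 + 4 * α * δ)
    (hΔ0 : 0 ≤ Δ) : |β - γ| < Δ :=
  abs_lt_of_sq_lt_sq (by nlinarith [mul_pos hα hδ]) hΔ0

theorem add_add_pos_of_sq_eq (hα : 0 < α) (hδ : 0 < δ) (hH : max β γ ≥ 0 ∨ β * γ < α * δ)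
    (hΔ : Δ ^ 2 = (β - γ) ^ 2 + 4 * α * δ) (hΔ0 : 0 ≤ Δ) : 0 < β + γ + Δ := by
  rcases hH with hmax | hlt
  · have := abs_lt.mp (abs_sub_lt_of_sq_eq hα hδ hΔ hΔ0)
    rcases le_total β γ with hβγ | hγβ
    · rw [max_eq_right hβγ] at hmax; linarith
    · rw [max_eq_left hγβ] at hmax; linarith
  · have := abs_lt.mp (abs_lt_of_sq_lt_sq (a := β + γ) (b := Δ) (by nlinarith) hΔ0)
    linarith

theorem quadratic_eq_zero_of_two_mul_eq (hα : α ≠ 0) (hΔ : Δ ^ 2 = (β - γ) ^ 2 + 4 * α * δ)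
    (hr : 2 * α * r = γ - β + Δ) : α * r ^ 2 + (β - γ) * r - δ = 0 := by
  have h : 4 * α * (α * r ^ 2 + (β - γ) * r - δ) = 0 := by
    linear_combination (2 * α * r + γ - β + Δ + 2 * (β - γ)) * hr + hΔ
  simpa [hα] using h

theorem sqrt_div_sqrt_eq_root (hα : 0 < α) (hδ : 0 < δ) (hΔ : Δ ^ 2 = (β - γ) ^ 2 + 4 * α * δ)
    (hsum : 0 < β + γ + Δ) (hr : 2 * α * r = γ - β + Δ) (hr0 : 0 < r) :
    √(2 * δ + γ / α * (γ - β + Δ)) / √(2 * α + β / δ * (β - γ + Δ)) = r := by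
  have hroot := quadratic_eq_zero_of_two_mul_eq hα.ne' hΔ hr
  have hkey : r * (β - γ + Δ) = 2 * δ := by
    have h : 2 * α * (r * (β - γ + Δ) - 2 * δ) = 0 := by
      linear_combination (β - γ + Δ) * hr + hΔ
    linarith [(mul_eq_zero.mp h).resolve_left (by positivity)]
  have hc : 2 * α + β / δ * (β - γ + Δ) = (β + γ + Δ) / r := by
    rw [eq_div_iff hr0.ne']
    field_simp
    linear_combination β * hkey + δ * hr
  have hd : 2 * δ + γ / α * (γ - β + Δ) = r ^ 2 * ((β + γ + Δ) / r) := by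
    field_simp
    linear_combination (α * r - γ) * hr - 2 * α * hroot
  have hc0 : 0 < √((β + γ + Δ) / r) := sqrt_pos.mpr (div_pos hsum hr0)
  rw [hd, hc, sqrt_mul (sq_nonneg r), sqrt_sq hr0.le, mul_div_assoc, div_self hc0.ne', mul_one]

end Constants

namespace IsSolution

variable {α β γ δ x₀ y₀ s t : ℝ} {x y : ℝ → ℝ}

theorem symm (h : IsSolution α β γ δ x₀ y₀ x y) : IsSolution δ γ β α y₀ x₀ y x := by
  obtain ⟨hx, hy, hnn, hx0, hy0, heq⟩ := h
  refine ⟨hy, hx, fun t ht => (hnn t ht).symm, hy0, hx0, fun t ht => ?_⟩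
  obtain ⟨nx, ny, ix, iy, ex, ey⟩ := heq t ht
  exact ⟨ny, nx, iy, ix, by rw [ey]; ring, by rw [ex]; ring⟩

theorem nonneg (h : IsSolution α β γ δ x₀ y₀ x y) (ht : 0 ≤ t) : 0 ≤ x t := (h.2.2.1 t ht).1

theorem intervalIntegrable_inv (h : IsSolution α β γ δ x₀ y₀ x y) (hs : 0 ≤ s) (ht : 0 ≤ t) :
    IntervalIntegrable (fun u => 1 / x u) volume s t :=
  (h.2.2.2.2.2 s hs).2.2.1.symm.trans (h.2.2.2.2.2 t ht).2.2.1

theorem eq_add_integral (h : IsSolution α β γ δ x₀ y₀ x y) (hs : 0 ≤ s) (ht : 0 ≤ t) :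
    x t = x s + α * (∫ u in s..t, 1 / x u) + β * (∫ u in s..t, 1 / y u) := by
  obtain ⟨-, -, ixt, iyt, ext, -⟩ := h.2.2.2.2.2 t ht
  obtain ⟨-, -, ixs, iys, exs, -⟩ := h.2.2.2.2.2 s hs
  rw [← intervalIntegral.integral_interval_sub_left ixt ixs,
    ← intervalIntegral.integral_interval_sub_left iyt iys, ext, exs]
  ring

theorem ae_ne_zero (h : IsSolution α β γ δ x₀ y₀ x y) (hs : 0 ≤ s) (hst : s ≤ t) :
    ∀ᵐ u ∂volume.restrict (Ioc s t), x u ≠ 0 := by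
  rw [ae_restrict_iff' measurableSet_Ioc]
  refine measure_mono_null (fun u hu => ?_) (h.2.2.2.2.2 t (hs.trans hst)).1
  have hu' : s < u ∧ u ≤ t ∧ x u = 0 := by simpa using hu
  exact ⟨⟨hs.trans hu'.1.le, hu'.2.1⟩, hu'.2.2⟩

theorem integral_inv_pos (h : IsSolution α β γ δ x₀ y₀ x y) (hs : 0 ≤ s) (hst : s < t) :
    0 < ∫ u in s..t, 1 / x u := by
  have hnonneg : 0 ≤ᵐ[volume.restrict (uIoc s t)] fun u => 1 / x u := by
    rw [uIoc_of_le hst.le, EventuallyLE, ae_restrict_iff' measurableSet_Ioc]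
    exact ae_of_all _ fun u hu => one_div_nonneg.mpr (h.nonneg (hs.trans hu.1.le))
  rw [intervalIntegral.integral_pos_iff_support_of_nonneg_ae' hnonneg
    (h.intervalIntegrable_inv hs (hs.trans hst.le))]
  refine ⟨hst, ?_⟩
  set S := (Function.support fun u => 1 / x u) ∩ Ioc s t
  have hcover : Ioc s t ⊆ S ∪ {u ∈ Icc 0 t | x u = 0} := fun u hu => by
    by_cases hxu : x u = 0
    · exact Or.inr ⟨⟨hs.trans hu.1.le, hu.2⟩, hxu⟩
    · exact Or.inl ⟨by simpa using hxu, hu⟩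
  calc 0 < volume (Ioc s t) := by simpa using hst
    _ ≤ volume S + volume {u ∈ Icc 0 t | x u = 0} :=
      (measure_mono hcover).trans (measure_union_le _ _)
    _ = volume S := by rw [(h.2.2.2.2.2 t (hs.trans hst.le)).1, add_zero]

theorem integral_inv_le (h : IsSolution α β γ δ x₀ y₀ x y) {m : ℝ} (hm : 0 < m)
    (hs : 0 ≤ s) (hst : s ≤ t) (hb : ∀ u ∈ Icc s t, m ≤ x u) :
    ∫ u in s..t, 1 / x u ≤ (t - s) / m := by
  calc ∫ u in s..t, 1 / x u ≤ ∫ _ in s..t, 1 / m :=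
        intervalIntegral.integral_mono_on hst (h.intervalIntegrable_inv hs (hs.trans hst))
          intervalIntegrable_const fun u hu => one_div_le_one_div_of_le hm (hb u hu)
    _ = (t - s) / m := by rw [intervalIntegral.integral_const, smul_eq_mul]; ring

theorem le_mul_sub_of_eq_zero (hα : 0 ≤ α) (h : IsSolution α β γ δ x₀ y₀ x y) {m u : ℝ}
    (hm : 0 < m) (hs : 0 ≤ s) (hxt : x t = 0) (hy : ∀ v ∈ Icc s t, m ≤ y v) (hu : u ∈ Icc s t) :
    x u ≤ |β| / m * (t - u) := by
  have hu0 : 0 ≤ u := hs.trans hu.1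
  have hIx : 0 ≤ ∫ v in u..t, 1 / x v := intervalIntegral.integral_nonneg hu.2
    fun v hv => one_div_nonneg.mpr (h.nonneg (hu0.trans hv.1))
  have hIy0 : 0 ≤ ∫ v in u..t, 1 / y v := intervalIntegral.integral_nonneg hu.2
    fun v hv => one_div_nonneg.mpr (h.symm.nonneg (hu0.trans hv.1))
  have hIy : ∫ v in u..t, 1 / y v ≤ (t - u) / m := h.symm.integral_inv_le hm hu0 hu.2
    fun v hv => hy v ⟨hu.1.trans hv.1, hv.2⟩
  have hxu := h.eq_add_integral hu0 (hu0.trans hu.2)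
  rw [hxt] at hxu
  rw [div_mul_comm]
  linarith [mul_nonneg hα hIx, mul_le_mul_of_nonneg_right (neg_le_abs β) hIy0,
    mul_le_mul_of_nonneg_left hIy (abs_nonneg β)]

theorem fst_pos_of_snd_pos (hα : 0 ≤ α) (h : IsSolution α β γ δ x₀ y₀ x y) (ht : 0 < t)
    (hy : 0 < y t) : 0 < x t := by
  by_contra hx
  have hxt : x t = 0 := le_antisymm (not_lt.mp hx) (h.nonneg ht.le)
  have hm : 0 < y t / 2 := by positivity
  have hnear : {u | 0 ≤ u ∧ y t / 2 < y u} ∈ 𝓝[≤] t := nhdsWithin_le_nhds <|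
    Filter.inter_mem (Ici_mem_nhds ht)
      ((h.2.1.continuousAt (Ici_mem_nhds ht)).eventually (lt_mem_nhds (by linarith)))
  obtain ⟨s, hst, hsub⟩ := mem_nhdsLE_iff_exists_Icc_subset.mp hnear
  have hs0 : 0 ≤ s := (hsub ⟨le_rfl, hst.le⟩).1
  refine not_intervalIntegrable_one_div_of_le_mul_sub hst (C := |β| / (y t / 2) + 1)
    (by positivity) ?_ (h.intervalIntegrable_inv hs0 ht.le)
  filter_upwards [ae_restrict_mem measurableSet_Ioc, h.ae_ne_zero hs0 hst.le] with u hu hxu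
  refine ⟨(h.nonneg (hs0.trans hu.1.le)).lt_of_ne' hxu, ?_⟩
  calc x u ≤ |β| / (y t / 2) * (t - u) := h.le_mul_sub_of_eq_zero hα hm hs0 hxt
        (fun v hv => (hsub hv).2.le) ⟨hu.1.le, hu.2⟩
    _ ≤ (|β| / (y t / 2) + 1) * (t - u) := by gcongr <;> linarith [hu.2]

theorem pos_add (h : IsSolution α β γ δ x₀ y₀ x y) {p q : ℝ} (hp : 0 ≤ p) (hq : 0 ≤ q)
    (hpα : 0 < p * α + q * γ) (hpβ : 0 ≤ p * β + q * δ) (ht : 0 < t) :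
    0 < p * x t + q * y t := by
  have hIx := h.integral_inv_pos le_rfl ht
  have hIy := (h.symm.integral_inv_pos le_rfl ht).le
  have hsplit : p * x t + q * y t = p * x 0 + q * y 0
      + (p * α + q * γ) * (∫ u in (0:ℝ)..t, 1 / x u)
      + (p * β + q * δ) * ∫ u in (0:ℝ)..t, 1 / y u := by
    rw [h.eq_add_integral le_rfl ht.le, h.symm.eq_add_integral le_rfl ht.le]
    ring
  rw [hsplit]
  linarith [mul_pos hpα hIx, mul_nonneg hpβ hIy, mul_nonneg hp (h.nonneg le_rfl),
    mul_nonneg hq (h.symm.nonneg le_rfl)]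

theorem pos (hα : 0 ≤ α) (hδ : 0 ≤ δ) (h : IsSolution α β γ δ x₀ y₀ x y) {p q : ℝ}
    (hp : 0 ≤ p) (hq : 0 ≤ q) (hpα : 0 < p * α + q * γ) (hpβ : 0 ≤ p * β + q * δ)
    (ht : 0 < t) : 0 < x t ∧ 0 < y t := by
  have hcomb := h.pos_add hp hq hpα hpβ ht
  have hx0 := h.nonneg ht.le
  have hy0 := h.symm.nonneg ht.le
  rcases hx0.eq_or_lt with hxt | hxt
  · have hyt : 0 < y t := by
      rw [← hxt, mul_zero, zero_add] at hcomb
      exact pos_of_mul_pos_right hcomb hq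
    exact ⟨h.fst_pos_of_snd_pos hα ht hyt, hyt⟩
  · exact ⟨hxt, h.symm.fst_pos_of_snd_pos hδ ht hxt⟩

theorem hasDerivAt_integral_inv (h : IsSolution α β γ δ x₀ y₀ x y)
    (hpos : ∀ u > 0, 0 < x u) (ht : 0 < t) :
    HasDerivAt (fun u => ∫ s in (0:ℝ)..u, 1 / x s) (1 / x t) t := by
  have hcont : ContinuousOn (fun u => 1 / x u) (Ioi 0) :=
    continuousOn_const.div (h.1.mono Ioi_subset_Ici_self) fun u hu => (hpos u hu).ne'
  exact intervalIntegral.integral_hasDerivAt_right (h.intervalIntegrable_inv le_rfl ht.le)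
    (hcont.stronglyMeasurableAtFilter isOpen_Ioi t ht) (hcont.continuousAt (Ioi_mem_nhds ht))

theorem hasDerivAt (h : IsSolution α β γ δ x₀ y₀ x y) (hpos : ∀ u > 0, 0 < x u ∧ 0 < y u)
    (ht : 0 < t) : HasDerivAt x (α / x t + β / y t) t := by
  have hIx := h.hasDerivAt_integral_inv (fun u hu => (hpos u hu).1) ht
  have hIy := h.symm.hasDerivAt_integral_inv (fun u hu => (hpos u hu).2) ht
  refine ((((hIx.const_mul α).add (hIy.const_mul β))).const_add x₀).congr_deriv (by ring)
    |>.congr_of_eventuallyEq ?_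
  filter_upwards [Ioi_mem_nhds ht] with u hu
  rw [(h.2.2.2.2.2 u (le_of_lt hu)).2.2.2.2.1, add_assoc]
  rfl

end IsSolution

section Ratio

variable {α β γ δ r r' t : ℝ} {x y : ℝ → ℝ}

theorem hasDerivAt_sub_mul_of_root (hx : HasDerivAt x (α / x t + β / y t) t)
    (hy : HasDerivAt y (γ / x t + δ / y t) t) (hx0 : x t ≠ 0) (hy0 : y t ≠ 0)
    (hr : α * r ^ 2 + (β - γ) * r - δ = 0) :
    HasDerivAt (fun s => y s - r * x s)
      ((γ - r * α) * (1 / (x t * y t)) * (y t - r * x t)) t := by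
  refine (hy.sub (hx.const_mul r)).congr_deriv ?_
  field_simp
  linear_combination (-x t) * hr

theorem sub_mul_pos_of_neg (hr'0 : r' < 0) (hx : 0 < x t) (hy : 0 < y t) :
    0 < y t - r' * x t := by
  nlinarith

theorem tendsto_log_sub_mul_atTop (hpos : ∀ t > 0, 0 < x t ∧ 0 < y t)
    (hx : ∀ t > 0, HasDerivAt x (α / x t + β / y t) t)
    (hy : ∀ t > 0, HasDerivAt y (γ / x t + δ / y t) t)
    (hr' : α * r' ^ 2 + (β - γ) * r' - δ = 0) (hr'0 : r' < 0) (hμ : 0 < γ - r' * α) :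
    Tendsto (fun t => log (y t - r' * x t)) atTop atTop := by
  -- `(v ^ 2)' = 2 μ v ^ 2 / (x y)` for `v = y - r' x`.
  have hv_sq : Tendsto (fun t => (y t - r' * x t) ^ 2) atTop atTop := by
    refine tendsto_atTop_of_le_hasDerivAt (mul_pos (mul_pos two_pos hμ) (neg_pos.mpr hr'0))
      (fun t ht => (hasDerivAt_sub_mul_of_root (hx t ht) (hy t ht) (hpos t ht).1.ne'
        (hpos t ht).2.ne' hr').pow 2) fun t ht => ?_
    obtain ⟨hxt, hyt⟩ := hpos t ht
    have hxy : -r' * (x t * y t) ≤ (y t - r' * x t) ^ 2 := by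
      nlinarith [mul_pos (mul_pos (neg_pos.mpr hr'0) hxt) hyt, sq_nonneg (y t),
        sq_nonneg (r' * x t)]
    calc 2 * (γ - r' * α) * -r'
        ≤ 2 * (γ - r' * α) * ((y t - r' * x t) ^ 2 / (x t * y t)) := by
          gcongr
          rwa [le_div_iff₀ (mul_pos hxt hyt)]
      _ = _ := by ring
  refine ((tendsto_log_atTop.comp hv_sq).atTop_div_const two_pos).congr' ?_
  filter_upwards with t
  simp [Real.log_pow]

theorem tendsto_div_of_hasDerivAt (hα : 0 < α) (hpos : ∀ t > 0, 0 < x t ∧ 0 < y t)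
    (hx : ∀ t > 0, HasDerivAt x (α / x t + β / y t) t)
    (hy : ∀ t > 0, HasDerivAt y (γ / x t + δ / y t) t)
    (hr : α * r ^ 2 + (β - γ) * r - δ = 0) (hr' : α * r' ^ 2 + (β - γ) * r' - δ = 0)
    (hr'0 : r' < 0) (hrr' : r' < r) (hμ : 0 < γ - r' * α) :
    Tendsto (fun t => y t / x t) atTop (𝓝 r) := by
  have hv0 : ∀ t > 0, 0 < y t - r' * x t := fun t ht =>
    sub_mul_pos_of_neg hr'0 (hpos t ht).1 (hpos t ht).2
  refine tendsto_div_of_tendsto_sub_mul_div hrr'.ne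
    (eventually_gt_atTop 0 |>.mono fun t ht => (hpos t ht).1.ne')
    (eventually_gt_atTop 0 |>.mono fun t ht => (hv0 t ht).ne') ?_
  exact tendsto_div_of_hasDerivAt_of_lt hμ (by nlinarith)
    (fun t ht => hasDerivAt_sub_mul_of_root (hx t ht) (hy t ht) (hpos t ht).1.ne'
      (hpos t ht).2.ne' hr)
    (fun t ht => hasDerivAt_sub_mul_of_root (hx t ht) (hy t ht) (hpos t ht).1.ne'
      (hpos t ht).2.ne' hr')
    hv0 (tendsto_log_sub_mul_atTop hpos hx hy hr' hr'0 hμ)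

end Ratio

theorem slope_limit_general (α β γ δ : ℝ) (hα : 0 < α) (hδ : 0 < δ)
    (hH : max β γ ≥ 0 ∨ β * γ < α * δ)
    (c d : ℝ)
    (hc : c = Real.sqrt (2 * α + β / δ * (β - γ + Real.sqrt ((β - γ) ^ 2 + 4 * α * δ))))
    (hd : d = Real.sqrt (2 * δ + γ / α * (γ - β + Real.sqrt ((β - γ) ^ 2 + 4 * α * δ))))
    (x₀ y₀ : ℝ)
    (x y : ℝ → ℝ) (hsol : IsSolution α β γ δ x₀ y₀ x y) :
    Filter.Tendsto (fun t => y t / x t) Filter.atTop (nhds (d / c)) := by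
  set Δ := √((β - γ) ^ 2 + 4 * α * δ)
  have hΔ : Δ ^ 2 = (β - γ) ^ 2 + 4 * α * δ :=
    sq_sqrt (by nlinarith [mul_pos hα hδ, sq_nonneg (β - γ)])
  have hΔ0 : 0 ≤ Δ := sqrt_nonneg _
  have hsum := add_add_pos_of_sq_eq hα hδ hH hΔ hΔ0
  have hgap := abs_lt.mp (abs_sub_lt_of_sq_eq hα hδ hΔ hΔ0)
  obtain ⟨r, hr⟩ : ∃ r, 2 * α * r = γ - β + Δ := ⟨(γ - β + Δ) / (2 * α), by field_simp⟩
  obtain ⟨r', hr'⟩ : ∃ r', 2 * α * r' = γ - β + -Δ := ⟨(γ - β + -Δ) / (2 * α), by field_simp⟩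
  have hr0 : 0 < r := pos_of_mul_pos_right (by linarith : 0 < 2 * α * r) (by positivity)
  have hr'0 : r' < 0 := neg_of_mul_neg_right (by linarith : 2 * α * r' < 0) (by positivity)
  have hroot := quadratic_eq_zero_of_two_mul_eq hα.ne' hΔ hr
  have hroot' := quadratic_eq_zero_of_two_mul_eq hα.ne' (by rwa [neg_sq]) hr'
  have hμ : 0 < γ - r' * α := by linarith
  -- `y - r' x` is the positive combination: its coefficients are `μ` and `-r' μ`.
  have hpos : ∀ t > 0, 0 < x t ∧ 0 < y t := fun t ht =>
    hsol.pos hα.le hδ.le (neg_nonneg.mpr hr'0.le) zero_le_one (by linarith)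
      (by linarith [mul_pos (neg_pos.mpr hr'0) hμ]) ht
  have hx : ∀ t > 0, HasDerivAt x (α / x t + β / y t) t := fun t ht => hsol.hasDerivAt hpos ht
  have hy : ∀ t > 0, HasDerivAt y (γ / x t + δ / y t) t := fun t ht =>
    (hsol.symm.hasDerivAt (fun u hu => (hpos u hu).symm) ht).congr_deriv (add_comm _ _)
  rw [hc, hd, sqrt_div_sqrt_eq_root hα hδ hΔ hsum hr hr0]
  exact tendsto_div_of_hasDerivAt hα hpos hx hy hroot hroot' hr'0 (hr'0.trans hr0) hμ

/-- Under (H), any solution starting at a point of `S` satisfies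
`y(t) / x(t) → d / c` as `t → ∞`. -/
theorem slope_limit (α β γ δ : ℝ) (hα : 0 < α) (hδ : 0 < δ)
    (hH : max β γ ≥ 0 ∨ β * γ < α * δ)
    (c d : ℝ)
    (hc : c = Real.sqrt (2 * α + β / δ * (β - γ + Real.sqrt ((β - γ) ^ 2 + 4 * α * δ))))
    (hd : d = Real.sqrt (2 * δ + γ / α * (γ - β + Real.sqrt ((β - γ) ^ 2 + 4 * α * δ))))
    (x₀ y₀ : ℝ) (hx₀ : 0 ≤ x₀) (hy₀ : 0 ≤ y₀)
    (x y : ℝ → ℝ) (hsol : IsSolution α β γ δ x₀ y₀ x y) :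
    Filter.Tendsto (fun t => y t / x t) Filter.atTop (nhds (d / c)) :=
  slope_limit_general α β γ δ hα hδ hH c d hc hd x₀ y₀ x y hsol
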